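/- arXiv:2308.03344 — 2 statements merged into one kernel-verified Lean document; each statement's English description precedes it below -/
import Mathlib

section
/- Let D be a unitary on (ℂ²)^⊗d (the classic diffuser) and let E = CNOT^{(k_1)} ⊗ ⋯ ⊗ CNOT^{(k_d)} (after suitable reordering of qubit wires, with qubit j controlling its k_j − 1 expanded copies). Then the parallel diffuser 𝒟 = E ∘ (D ⊗ I) ∘ E satisfies: if D(Σ_i α_i |b_1⋯b_d⟩) = Σ_i α'_i |b_1⋯b_d⟩, then 𝒟(Σ_i α_i |b_1⟩^⊗k_1 ⋯ |b_d⟩^⊗k_d) = Σ_i α'_i |b_1⟩^⊗k_1 ⋯ |b_d⟩^⊗k_d, where i ranges over {0,...,2^d − 1} with binary expansion b_1⋯b_d. -/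
/-- The computational basis state `|a⟩` in the state space `α → ℂ`. -/
def ket {α : Type*} [DecidableEq α] (a : α) : α → ℂ :=
  fun b => if b = a then 1 else 0

section Parallel

variable {d : ℕ} (k : Fin d → ℕ)

/-- Basis states of the full register: variable `j` has `k j + 1` qubit
copies (one representative and `k j` expanded copies). -/
abbrev PBasis (k : Fin d → ℕ) := (j : Fin d) → Fin (k j + 1) → Bool

/-- The GHZ-encoded basis state `|b₁⟩^⊗k₁ ⋯ |b_d⟩^⊗k_d` for bits `v`. -/
def ghz (v : Fin d → Bool) : PBasis k → ℂ :=
  ket (fun j _ => v j)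

/-- `E = CNOT^{(k₁)} ⊗ ⋯ ⊗ CNOT^{(k_d)}`: for each variable `j`, qubit `0` of
its block controls the remaining `k j` expanded copies. -/
def Egate : (PBasis k → ℂ) →ₗ[ℂ] (PBasis k → ℂ) where
  toFun ψ := fun b => ψ (fun j i => if i = 0 then b j 0 else xor (b j i) (b j 0))
  map_add' _ _ := rfl
  map_smul' _ _ := rfl

/-- Representative bits of a basis state: qubit `0` of each block. -/
def rep (b : PBasis k) : Fin d → Bool := fun j => b j 0

/-- Replace the representative bits of `b` by `r`. -/
def replace (b : PBasis k) (r : Fin d → Bool) : PBasis k :=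
  fun j i => if i = 0 then r j else b j i

/-- `D ⊗ I`: the classic diffuser `D` acting on the `d` representative qubits
and the identity on all expanded copies, written via matrix entries of `D`. -/
noncomputable def DtensorI (D : ((Fin d → Bool) → ℂ) →ₗ[ℂ] ((Fin d → Bool) → ℂ)) :
    (PBasis k → ℂ) →ₗ[ℂ] (PBasis k → ℂ) where
  toFun ψ := fun b => ∑ r : Fin d → Bool, (D (ket r)) (rep k b) * ψ (replace k b r)
  map_add' ψ φ := by
    funext b
    simp [mul_add, Finset.sum_add_distrib]
  map_smul' c ψ := by
    funext b
    simp only [Pi.smul_apply, smul_eq_mul, RingHom.id_apply]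
    rw [Finset.mul_sum]
    exact Finset.sum_congr rfl fun r _ => by ring

lemma Egate_ghz (v : Fin d → Bool) :
    Egate k (ghz k v) = ket (fun j i => if i = 0 then v j else false) := by
  funext b
  show ghz k v _ = _
  unfold ghz ket
  refine if_congr ?_ rfl rfl
  constructor
  · intro h
    funext j i
    have h0 := congrFun (congrFun h j) 0
    rw [if_pos rfl] at h0
    by_cases hi : i = 0
    · rw [hi, if_pos rfl]; exact h0
    · have hh := congrFun (congrFun h j) i
      rw [if_neg hi, h0] at hh
      rw [if_neg hi]
      cases hbi : b j i
      · rfl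
      · rw [hbi] at hh
        cases hv : v j <;> rw [hv] at hh <;> simp at hh
  · intro h
    subst h
    funext j i
    by_cases hi : i = 0 <;> simp [hi]

lemma DtensorI_ket (D : ((Fin d → Bool) → ℂ) →ₗ[ℂ] ((Fin d → Bool) → ℂ))
    (c : PBasis k) (b : PBasis k) :
    DtensorI k D (ket c) b
      = D (ket (rep k c)) (rep k b) * ket c (replace k b (rep k c)) := by
  show (∑ r : Fin d → Bool, (D (ket r)) (rep k b) * ket c (replace k b r)) = _
  rw [Finset.sum_eq_single (rep k c)]
  · intro r _ hr
    have : ket c (replace k b r) = 0 := by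
      unfold ket
      rw [if_neg]
      intro h
      apply hr
      funext j
      have h0 := congrFun (congrFun h j) 0
      simp only [replace, if_pos rfl] at h0
      simpa [rep] using h0
    rw [this, mul_zero]
  · intro h; exact absurd (Finset.mem_univ _) h

/-- **Parallel diffuser correctness (Theorem 2).**  If the classic diffuser
`D` maps `Σᵢ αᵢ |b₁⋯b_d⟩` to `Σᵢ α'ᵢ |b₁⋯b_d⟩`, then the parallel diffuser
`𝒟 = E ∘ (D ⊗ I) ∘ E` maps `Σᵢ αᵢ |b₁⟩^⊗k₁ ⋯ |b_d⟩^⊗k_d` to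
`Σᵢ α'ᵢ |b₁⟩^⊗k₁ ⋯ |b_d⟩^⊗k_d`. -/
theorem parallel_diffuser_correct
    (D : ((Fin d → Bool) → ℂ) →ₗ[ℂ] ((Fin d → Bool) → ℂ))
    (α α' : (Fin d → Bool) → ℂ)
    (hD : D (∑ v : Fin d → Bool, α v • ket v) = ∑ v : Fin d → Bool, α' v • ket v) :
    ((Egate k) ∘ₗ (DtensorI k D) ∘ₗ (Egate k))
        (∑ v : Fin d → Bool, α v • ghz k v) =
      ∑ v : Fin d → Bool, α' v • ghz k v := by
  classical
  simp only [LinearMap.comp_apply, map_sum, map_smul]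
  -- compute the action on each ghz state pointwise
  have key : ∀ v b,
      (Egate k (DtensorI k D (Egate k (ghz k v)))) b
        = D (ket v) (rep k b)
            * (if (∀ j (i : Fin (k j + 1)), b j i = b j 0) then 1 else 0) := by
    intro v b
    rw [Egate_ghz]
    show DtensorI k D (ket _) (fun j i => if i = 0 then b j 0 else xor (b j i) (b j 0)) = _
    rw [DtensorI_ket]
    have hrep : rep k (fun j i => if i = 0 then b j 0 else xor (b j i) (b j 0))
        = rep k b := by funext j; simp [rep]
    have hrepc : rep k (fun j i => if i = 0 then v j else false) = v := by
      funext j; simp [rep]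
    rw [hrep, hrepc]
    congr 1
    unfold ket replace
    refine if_congr ?_ rfl rfl
    constructor
    · intro h j i
      by_cases hi : i = 0
      · rw [hi]
      · have hh := congrFun (congrFun h j) i
        simp only [if_neg hi] at hh
        revert hh; cases b j i <;> cases b j 0 <;> decide
    · intro h
      funext j i
      by_cases hi : i = 0
      · simp [hi]
      · simp only [if_neg hi, h j i, Bool.xor_self]
  -- the right-hand side pointwise
  have ghz_eq : ∀ v (b : PBasis k),
      ghz k v b = ket v (rep k b)
        * (if (∀ j (i : Fin (k j + 1)), b j i = b j 0) then 1 else 0) := by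
    intro v b
    unfold ghz ket rep
    by_cases hG : ∀ j (i : Fin (k j + 1)), b j i = b j 0
    · rw [if_pos hG, mul_one]
      congr 1
      simp only [eq_iff_iff]
      constructor
      · intro h; funext j
        exact (hG j 0).symm.trans (congrFun (congrFun h j) 0)
      · intro h; funext j i
        exact (hG j i).trans (congrFun h j)
    · rw [if_neg hG, mul_zero, if_neg]
      intro h
      exact hG fun j i => (congrFun (congrFun h j) i).trans
        (congrFun (congrFun h j) 0).symm
  funext b
  simp only [Finset.sum_apply, Pi.smul_apply, smul_eq_mul]
  calc ∑ v : Fin d → Bool, α v * (Egate k (DtensorI k D (Egate k (ghz k v)))) b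
      = (D (∑ v : Fin d → Bool, α v • ket v)) (rep k b)
          * (if (∀ j (i : Fin (k j + 1)), b j i = b j 0) then 1 else 0) := by
        rw [map_sum, Finset.sum_apply, Finset.sum_mul]
        refine Finset.sum_congr rfl fun v _ => ?_
        rw [key, map_smul, Pi.smul_apply, smul_eq_mul, mul_assoc]
    _ = ∑ v : Fin d → Bool, α' v * ghz k v b := by
        rw [hD, Finset.sum_apply, Finset.sum_mul]
        refine Finset.sum_congr rfl fun v _ => ?_
        rw [ghz_eq, Pi.smul_apply, smul_eq_mul, mul_assoc]

end Parallel
end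

section
/- The full distributed controlled-U protocol implements the m-controlled-U gate: for computational basis control states |C_1⟩⋯|C_m⟩ = |c_1⟩⋯|c_m⟩ and arbitrary target |t⟩, after the protocol the target is U|t⟩ if c_1 = ⋯ = c_m = 1 and |t⟩ otherwise, and each control qubit is restored to |c_i⟩. -/
/-- Amplitudes of the Hadamard-basis states: `pm false = |+⟩`,
`pm true = |−⟩`. -/
noncomputable def pm (sgn : Bool) (h : Bool) : ℂ :=
  ((1 / Real.sqrt 2 : ℝ) : ℂ) * (if sgn && h then -1 else 1)

/-- States of the full system: `m` control qubits `C`, `m` node halves `e`,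
`m` master halves `ê`, and one target qubit, coordinates `(cc, e, h, tb)`. -/
abbrev Sys (m : ℕ) := ((Fin m → Bool) × (Fin m → Bool) × (Fin m → Bool) × Bool) → ℂ

/-- Renormalize a state vector (divide by its ℓ²-norm). -/
noncomputable def renorm {m : ℕ} (ψ : Sys m) : Sys m :=
  (((Real.sqrt (∑ s, Complex.normSq (ψ s)))⁻¹ : ℝ) : ℂ) • ψ

noncomputable def rC : ℂ := ((1 / Real.sqrt 2 : ℝ) : ℂ)

lemma sqrt2_mul_self : Real.sqrt 2 * Real.sqrt 2 = 2 := Real.mul_self_sqrt (by norm_num)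

lemma rC_mul_rC : rC * rC = (1/2 : ℂ) := by
  unfold rC
  rw [← Complex.ofReal_mul, div_mul_div_comm, one_mul, sqrt2_mul_self]
  norm_num

lemma normSq_rC : Complex.normSq rC = 1/2 := by
  unfold rC
  rw [Complex.normSq_ofReal, div_mul_div_comm, one_mul, sqrt2_mul_self]

lemma pm_eq (sgn h : Bool) : pm sgn h = rC * (if sgn && h then -1 else 1) := rfl

lemma normSq_pm (sgn h : Bool) : Complex.normSq (pm sgn h) = 1/2 := by
  cases hb : (sgn && h) <;>
    simp [pm_eq, hb, Complex.normSq_mul, normSq_rC]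

lemma U_apply (U : (Bool → ℂ) →ₗ[ℂ] (Bool → ℂ)) (tvec : Bool → ℂ) (tb : Bool) :
    ∑ tb' : Bool, (U (ket tb')) tb * tvec tb' = (U tvec) tb := by
  have hv : tvec = tvec false • ket false + tvec true • ket true := by
    funext x; cases x <;> simp [ket]
  conv_rhs => rw [hv]
  rw [map_add, map_smul, map_smul]
  simp only [Fintype.sum_bool, Pi.add_apply, Pi.smul_apply, smul_eq_mul]
  ring

/-- **Distributed controlled-U protocol correctness (Theorem 3).**
For computational basis control states `|c₁⟩⋯|c_m⟩` and an arbitrary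
normalized target `|t⟩`, and for every pair of measurement outcomes
(`b` for the computational-basis measurements of the `e_i`, `sgn` for the
`{|+⟩,|−⟩}` measurements of the `ê_i`), the renormalized final state has the
target in state `U|t⟩` if `c₁ = ⋯ = c_m = 1` and `|t⟩` otherwise, with every
control qubit restored to `|c_i⟩` (and the `e_i`, `ê_i` in their measured
basis states). -/
theorem distributed_controlled_U_correct (m : ℕ) (c : Fin m → Bool)
    (U : (Bool → ℂ) →ₗ[ℂ] (Bool → ℂ)) (tvec : Bool → ℂ)
    (ht : ∑ tb, Complex.normSq (tvec tb) = 1)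
    (hU : ∀ v : Bool → ℂ, ∑ tb, Complex.normSq ((U v) tb) = ∑ tb, Complex.normSq (v tb)) :
    -- initial state: |c⟩ ⊗ (EPR pairs (e_i, ê_i)) ⊗ |t⟩
    let ψ0 : Sys m := fun s => (if s.1 = c then 1 else 0) *
      (∏ i, if s.2.1 i = s.2.2.1 i then ((1 / Real.sqrt 2 : ℝ) : ℂ) else 0) *
      tvec s.2.2.2
    -- step 1: each node applies CNOT from C_i to e_i
    let ψ1 : Sys m := fun s =>
      ψ0 (s.1, fun i => xor (s.2.1 i) (s.1 i), s.2.2.1, s.2.2.2)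
    ∀ b sgn : Fin m → Bool,
      -- step 2: measure each e_i (outcome b i), apply X to ê_i iff b i = 1
      let ψ2 : Sys m := fun s => (if s.2.1 = b then 1 else 0) *
        ψ1 (s.1, s.2.1, fun i => xor (s.2.2.1 i) (b i), s.2.2.2)
      -- step 3: master applies the m-controlled U with controls ê on the target
      let ψ3 : Sys m := fun s =>
        if ∀ i, s.2.2.1 i = true then
          ∑ tb' : Bool, (U (ket tb')) s.2.2.2 * ψ2 (s.1, s.2.1, s.2.2.1, tb')
        else ψ2 s
      -- step 4: measure each ê_i in the {|+⟩,|−⟩} basis (outcome sgn i)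
      let ψ4 : Sys m := fun s => (∏ i, pm (sgn i) (s.2.2.1 i)) *
        ∑ h' : Fin m → Bool, (∏ i, pm (sgn i) (h' i)) * ψ3 (s.1, s.2.1, h', s.2.2.2)
      -- step 5: node i applies Z to C_i iff the outcome sgn i was |−⟩
      let ψ5 : Sys m := fun s =>
        (∏ i, if sgn i && s.1 i then (-1 : ℂ) else 1) * ψ4 s
      renorm ψ5 = fun s =>
        (if s.1 = c then 1 else 0) * (if s.2.1 = b then 1 else 0) *
          (∏ i, pm (sgn i) (s.2.2.1 i)) *
          ((if ∀ i, c i = true then U tvec else tvec) s.2.2.2) := by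
  intro ψ0 ψ1 b sgn ψ2 ψ3 ψ4 ψ5
  set W : Bool → ℂ := if ∀ i, c i = true then U tvec else tvec with hWdef
  -- step 2 closed form
  have h2 : ∀ s, ψ2 s = (if s.1 = c then 1 else 0) * (if s.2.1 = b then 1 else 0) *
      (∏ i, if s.2.2.1 i = c i then rC else 0) * tvec s.2.2.2 := by
    rintro ⟨cc, e, h, tb⟩
    show (if e = b then 1 else 0) * ((if cc = c then 1 else 0) *
        (∏ i, if xor (e i) (cc i) = xor (h i) (b i) then rC else 0) * tvec tb) = _
    by_cases hc : cc = c
    · by_cases he : e = b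
      · rw [hc, he]
        have hprod : (∏ i, if xor (b i) (c i) = xor (h i) (b i) then rC else 0)
            = ∏ i, if h i = c i then rC else 0 := by
          refine Finset.prod_congr rfl fun i _ => ?_
          congr 1
          cases hb : b i <;> cases hcc : c i <;> cases hh : h i <;> simp
        rw [hprod]; ring
      · simp [he]
    · simp [hc]
  -- step 3 closed form
  have h3 : ∀ s, ψ3 s = (if s.1 = c then 1 else 0) * (if s.2.1 = b then 1 else 0) *
      (∏ i, if s.2.2.1 i = c i then rC else 0) * W s.2.2.2 := by
    rintro ⟨cc, e, h, tb⟩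
    show (if ∀ i, h i = true then
        ∑ tb' : Bool, (U (ket tb')) tb * ψ2 (cc, e, h, tb') else ψ2 (cc, e, h, tb)) = _
    by_cases hall : ∀ i, h i = true
    · rw [if_pos hall]
      have hterm : ∀ tb' ∈ (Finset.univ : Finset Bool),
          (U (ket tb')) tb * ψ2 (cc, e, h, tb') =
          (if cc = c then 1 else 0) * (if e = b then 1 else 0) *
          (∏ i, if h i = c i then rC else 0) * ((U (ket tb')) tb * tvec tb') := by
        intro tb' _; rw [h2]; ring
      rw [Finset.sum_congr rfl hterm, ← Finset.mul_sum, U_apply]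
      by_cases hcall : ∀ i, c i = true
      · simp only [hWdef, if_pos hcall]
      · push_neg at hcall
        obtain ⟨i0, hi0⟩ := hcall
        have hz : (∏ i, if h i = c i then rC else 0) = 0 := by
          refine Finset.prod_eq_zero (Finset.mem_univ i0) ?_
          rw [if_neg]; rw [hall i0]; exact fun hh => hi0 hh.symm
        simp only at hz ⊢
        rw [hz]; ring
    · rw [if_neg hall, h2]
      by_cases hcall : ∀ i, c i = true
      · push_neg at hall
        obtain ⟨i0, hi0⟩ := hall
        have hz : (∏ i, if h i = c i then rC else 0) = 0 := by
          refine Finset.prod_eq_zero (Finset.mem_univ i0) ?_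
          rw [if_neg]; rw [hcall i0]; exact hi0
        simp only at hz ⊢
        rw [hz]; ring
      · simp only [hWdef, if_neg hcall]
  -- step 4 closed form
  have h4 : ∀ s, ψ4 s = (if s.1 = c then 1 else 0) * (if s.2.1 = b then 1 else 0) *
      (∏ i, pm (sgn i) (s.2.2.1 i)) * (∏ i, pm (sgn i) (c i) * rC) * W s.2.2.2 := by
    rintro ⟨cc, e, h, tb⟩
    show (∏ i, pm (sgn i) (h i)) *
        (∑ h' : Fin m → Bool, (∏ i, pm (sgn i) (h' i)) * ψ3 (cc, e, h', tb)) = _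
    have hsum : (∑ h' : Fin m → Bool, (∏ i, pm (sgn i) (h' i)) * ψ3 (cc, e, h', tb)) =
        (∏ i, pm (sgn i) (c i)) * ((if cc = c then 1 else 0) * (if e = b then 1 else 0) *
          (∏ _i : Fin m, (rC : ℂ)) * W tb) := by
      rw [Finset.sum_eq_single_of_mem c (Finset.mem_univ c)]
      · rw [h3]
        have hcc : (∏ i, if c i = c i then rC else 0) = ∏ _i : Fin m, (rC : ℂ) :=
          Finset.prod_congr rfl fun i _ => by simp
        simp only at hcc ⊢
        rw [hcc]
      · intro h' _ hne
        rw [h3]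
        obtain ⟨i0, hi0⟩ := Function.ne_iff.mp hne
        have hz : (∏ i, if h' i = c i then rC else 0) = 0 :=
          Finset.prod_eq_zero (Finset.mem_univ i0) (if_neg hi0)
        simp only at hz ⊢
        rw [hz]; ring
    rw [hsum, Finset.prod_mul_distrib]
    ring
  -- step 5 closed form
  have h5 : ∀ s, ψ5 s = rC ^ (2 * m) *
      ((if s.1 = c then 1 else 0) * (if s.2.1 = b then 1 else 0) *
        (∏ i, pm (sgn i) (s.2.2.1 i)) * W s.2.2.2) := by
    rintro ⟨cc, e, h, tb⟩
    show (∏ i, if sgn i && cc i then (-1 : ℂ) else 1) * ψ4 (cc, e, h, tb) = _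
    rw [h4]
    by_cases hc : cc = c
    · subst hc
      have key : (∏ i, if sgn i && cc i then (-1 : ℂ) else 1) *
          (∏ i, pm (sgn i) (cc i) * rC) = rC ^ (2 * m) := by
        rw [← Finset.prod_mul_distrib]
        have hfac : ∀ i ∈ (Finset.univ : Finset (Fin m)),
            (if sgn i && cc i then (-1 : ℂ) else 1) *
            (pm (sgn i) (cc i) * rC) = rC * rC := by
          intro i _
          cases hb : sgn i && cc i <;> simp [pm_eq, hb] <;> ring
        rw [Finset.prod_congr rfl hfac, Finset.prod_const, Finset.card_univ,
          Fintype.card_fin, two_mul, pow_add]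
        ring
      calc (∏ i, if sgn i && cc i then (-1 : ℂ) else 1) *
          ((if cc = cc then 1 else 0) * (if e = b then 1 else 0) *
            (∏ i, pm (sgn i) (h i)) * (∏ i, pm (sgn i) (cc i) * rC) * W tb)
          = ((∏ i, if sgn i && cc i then (-1 : ℂ) else 1) *
              (∏ i, pm (sgn i) (cc i) * rC)) *
            ((if cc = cc then 1 else 0) * (if e = b then 1 else 0) *
              (∏ i, pm (sgn i) (h i)) * W tb) := by ring
        _ = _ := by rw [key]
    · simp [hc]
  -- norm of W
  have hWnorm : ∑ tb, Complex.normSq (W tb) = 1 := by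
    by_cases hcall : ∀ i, c i = true
    · simp only [hWdef, if_pos hcall]; rw [hU]; exact ht
    · simp only [hWdef, if_neg hcall]; exact ht
  -- norm of ψ5
  have hnorm : ∑ s, Complex.normSq (ψ5 s) = (1/4 : ℝ) ^ m := by
    have hpt : ∀ s : (Fin m → Bool) × (Fin m → Bool) × (Fin m → Bool) × Bool,
        Complex.normSq (ψ5 s) = (1/2 : ℝ) ^ (3 * m) *
          ((if s.1 = c then 1 else 0) * ((if s.2.1 = b then 1 else 0) *
            Complex.normSq (W s.2.2.2))) := by
      intro s
      rw [h5 s]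
      rw [Complex.normSq_mul, Complex.normSq_mul, Complex.normSq_mul, Complex.normSq_mul]
      have e1 : Complex.normSq (rC ^ (2 * m)) = (1/2 : ℝ) ^ (2 * m) := by
        rw [map_pow, normSq_rC]
      have e2 : Complex.normSq (if s.1 = c then (1:ℂ) else 0) =
          (if s.1 = c then (1:ℝ) else 0) := by split <;> simp
      have e3 : Complex.normSq (if s.2.1 = b then (1:ℂ) else 0) =
          (if s.2.1 = b then (1:ℝ) else 0) := by split <;> simp
      have e4 : Complex.normSq (∏ i, pm (sgn i) (s.2.2.1 i)) = (1/2 : ℝ) ^ m := by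
        rw [map_prod]
        simp only [normSq_pm]
        rw [Finset.prod_const, Finset.card_univ, Fintype.card_fin]
      rw [e1, e2, e3, e4]
      rw [show 3 * m = 2 * m + m by ring, pow_add]
      ring
    rw [Finset.sum_congr rfl fun s _ => hpt s, ← Finset.mul_sum]
    have hin : (∑ s : (Fin m → Bool) × (Fin m → Bool) × (Fin m → Bool) × Bool,
        ((if s.1 = c then (1:ℝ) else 0) * ((if s.2.1 = b then 1 else 0) *
          Complex.normSq (W s.2.2.2)))) = (2:ℝ) ^ m := by
      rw [Fintype.sum_prod_type]
      rw [Finset.sum_eq_single_of_mem c (Finset.mem_univ c)]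
      · simp only [if_pos rfl, one_mul]
        rw [Fintype.sum_prod_type]
        rw [Finset.sum_eq_single_of_mem b (Finset.mem_univ b)]
        · rw [Fintype.sum_prod_type]
          simp only [if_true, eq_self_iff_true, one_mul]
          rw [Finset.sum_congr rfl (fun (h : Fin m → Bool) _ => hWnorm),
            Finset.sum_const, Finset.card_univ]
          simp [Fintype.card_fun]
        · intro e _ hne
          simp [hne]
      · intro cc _ hne
        simp [hne]
    rw [hin]
    rw [show 3 * m = 2 * m + m by ring, pow_add, pow_mul]
    rw [mul_assoc, ← mul_pow]
    norm_num
  -- conclusion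
  funext s
  show (((Real.sqrt (∑ s, Complex.normSq (ψ5 s)))⁻¹ : ℝ) : ℂ) * ψ5 s = _
  rw [hnorm, h5 s]
  have hsqrt : Real.sqrt ((1/4 : ℝ) ^ m) = (1/2 : ℝ) ^ m := by
    rw [show ((1/4 : ℝ)) ^ m = ((1/2 : ℝ) ^ m) ^ 2 by rw [← pow_mul, mul_comm, pow_mul]; norm_num]
    exact Real.sqrt_sq (by positivity)
  rw [hsqrt]
  have hrc : rC ^ (2 * m) = (1/2 : ℂ) ^ m := by
    rw [pow_mul, sq, rC_mul_rC]
  rw [hrc]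
  have hcast : ((((1/2 : ℝ) ^ m)⁻¹ : ℝ) : ℂ) = ((1/2 : ℂ) ^ m)⁻¹ := by
    push_cast
    norm_num
  rw [hcast, ← mul_assoc, inv_mul_cancel₀ (pow_ne_zero m (by norm_num))]
  rw [one_mul]
end
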